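/- arXiv:1201.5168 — 2 statements merged into one kernel-verified Lean document; each statement's English description precedes it below -/
import Mathlib

section
/- For every real k > 0 there is a constant β_k > 0 such that: if T1 and T2 are (unrooted) binary phylogenetic trees on the same leaf-set of cardinality n, each of radius at most k·log n, then mast{T1, T2} ≥ n^{β_k}. -/
/-!
# Rooted binary phylogenetic trees

`RTree L` is the type of rooted binary trees with leaves labelled by elements of `L`:
every internal vertex has exactly two children (a left child and a right child), and
a tree with one leaf is a single vertex.
-/

inductive RTree (L : Type) : Type
  | leaf : L → RTree L
  | node : RTree L → RTree L → RTree L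

namespace RTree

variable {L : Type}

/-- The list of leaf labels of a rooted binary tree, read from left to right. -/
def leafList : RTree L → List L
  | leaf b => [b]
  | node l r => leafList l ++ leafList r

/-- The number of leaves of a rooted binary tree. -/
def numLeaves (T : RTree L) : ℕ := T.leafList.length

/-- The set of leaf labels of a rooted binary tree. -/
def leafSet (T : RTree L) : Set L := {b | b ∈ T.leafList}

/-- The height of a rooted binary tree: the maximum distance from the root to a leaf. -/
def height : RTree L → ℕ
  | leaf _ => 0
  | node l r => max (height l) (height r) + 1

/-- A rooted binary tree is balanced if all of its leaves are at the same distance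
from the root. -/
def IsBalanced : RTree L → Prop
  | leaf _ => True
  | node l r => IsBalanced l ∧ IsBalanced r ∧ height l = height r

/-- A rooted binary tree is phylogenetic if its leaves are labelled bijectively by a
finite set, i.e. all leaf labels are distinct. -/
def IsPhylo (T : RTree L) : Prop := T.leafList.Nodup

/-- `Embeds S T` is the subtree relation `S ⪯ T`: there is an injective map `f` from the
vertices of `S` to the vertices of `T` such that `f x = x` for every leaf `x` of `S`
(leaves being identified across trees by their labels) and
`f (x ∧ y) = f x ∧ f y` for all vertices `x`, `y` of `S`, where `∧` denotes the most
recent common ancestor.  Equivalently (for trees with distinct leaf labels), `S` is the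
restriction of `T` to the leaf set of `S`, up to rooted isomorphism; this structural
characterization is taken as the definition. -/
inductive Embeds : RTree L → RTree L → Prop
  | leaf (b : L) : Embeds (RTree.leaf b) (RTree.leaf b)
  | left {S l r : RTree L} : Embeds S l → Embeds S (RTree.node l r)
  | right {S l r : RTree L} : Embeds S r → Embeds S (RTree.node l r)
  | pair {s₁ s₂ l r : RTree L} :
      Embeds s₁ l → Embeds s₂ r → Embeds (RTree.node s₁ s₂) (RTree.node l r)
  | pair_swap {s₁ s₂ l r : RTree L} :
      Embeds s₁ r → Embeds s₂ l → Embeds (RTree.node s₁ s₂) (RTree.node l r)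

/-- `mast T₁ T₂` is the maximum cardinality of a subset `X ⊆ L(T₁) ∩ L(T₂)` such that
the restrictions `T₁|X` and `T₂|X` are isomorphic; equivalently, the maximum number of
leaves of a rooted binary phylogenetic tree `S` with `S ⪯ T₁` and `S ⪯ T₂`. -/
noncomputable def mast (T₁ T₂ : RTree L) : ℕ :=
  sSup {n | ∃ S : RTree L, S.IsPhylo ∧ Embeds S T₁ ∧ Embeds S T₂ ∧ S.numLeaves = n}

end RTree

/-!
# Unrooted binary phylogenetic trees, via rooted representatives

An unrooted binary phylogenetic tree (all internal vertices of degree 3) with at least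
two leaves is represented by any rooted binary tree obtained from it by subdividing an
edge and rooting there; conversely, suppressing the (degree-2) root of a rooted binary
tree yields an unrooted one.  Two rooted trees represent the same unrooted tree (i.e.
the unrooted trees are isomorphic by a graph isomorphism fixing every leaf label) iff
they are related by the equivalence relation `URel` generated by moving the root across
an edge together with (unordered) rooted isomorphism.
-/

namespace RTree

variable {L : Type}

/-- Rooted isomorphism of rooted binary trees, fixing all leaf labels (the two children
of a vertex are unordered). -/
inductive RIso : RTree L → RTree L → Prop
  | leaf (b : L) : RIso (RTree.leaf b) (RTree.leaf b)
  | pair {a b c d : RTree L} :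
      RIso a c → RIso b d → RIso (RTree.node a b) (RTree.node c d)
  | pair_swap {a b c d : RTree L} :
      RIso a d → RIso b c → RIso (RTree.node a b) (RTree.node c d)

/-- Moving the root of a rooted binary tree across one edge of the underlying unrooted
tree: this does not change the unrooted tree obtained by suppressing the root. -/
inductive RootMove : RTree L → RTree L → Prop
  | assoc (a b c : RTree L) :
      RootMove (RTree.node a (RTree.node b c)) (RTree.node (RTree.node a b) c)

/-- `URel S T` holds iff the unrooted binary trees obtained from `S` and `T` by
suppressing their roots are isomorphic by a graph isomorphism fixing every leaf label. -/
def URel (S T : RTree L) : Prop :=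
  Relation.EqvGen (fun X Y => RootMove X Y ∨ RIso X Y) S T

/-- `umast T₁ T₂` is the maximum agreement subtree size of the *unrooted* binary
phylogenetic trees represented by `T₁` and `T₂`: the maximum cardinality of a set
`X ⊆ L(T₁) ∩ L(T₂)` such that the unrooted restrictions `T₁|X` and `T₂|X` are
isomorphic (fixing leaf labels).  Equivalently, the maximum number of leaves of a
common unrooted subtree, given here by a pair of rooted representatives. -/
noncomputable def umast (T₁ T₂ : RTree L) : ℕ :=
  sSup {n | ∃ S₁ S₂ : RTree L, S₁.IsPhylo ∧ S₂.IsPhylo ∧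
    Embeds S₁ T₁ ∧ Embeds S₂ T₂ ∧ URel S₁ S₂ ∧ S₁.numLeaves = n}

end RTree

namespace RTree

variable {L : Type}

/-- The maximum length (number of edges) of a path in a rooted binary tree (the root
counting as a genuine degree-2 vertex). -/
def rdiam : RTree L → ℕ
  | RTree.leaf _ => 0
  | RTree.node l r => max (max (rdiam l) (rdiam r)) (l.height + r.height + 2)

/-- The diameter of the unrooted tree obtained by suppressing the root: the longest
path through the (suppressed) root loses one edge. -/
def udiam : RTree L → ℕ
  | RTree.leaf _ => 0
  | RTree.node l r => max (max (rdiam l) (rdiam r)) (l.height + r.height + 1)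

/-- The radius of the unrooted tree represented by a rooted binary tree: the minimum
over vertices `u` of the maximum distance from `u` to any other vertex.  For a tree
this equals `⌈diameter / 2⌉`. -/
def uradius (T : RTree L) : ℕ := (udiam T + 1) / 2

end RTree

/-!
Root both trees and walk down them simultaneously.  At a pair of internal vertices `(A, B)`,
`(C, D)` sharing `n` leaves, either one of the four children still shares `λ n` leaves with the
other tree, and we descend into it, losing one factor `λ` per unit of height; or every child shares
fewer, and then one of the two matchings of the children (`A C, B D` or `A D, B C`) has both pairs
sharing at least `(1 - λ) n / 2` leaves, so two agreement subtrees join at a new root.  With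
`((1 - λ) / 2) ^ β ≥ 1 / 2` this gives, by induction, a rooted agreement subtree with at least
`(λ ^ (h₁ + h₂) n) ^ β` leaves, `hᵢ` the heights.  A rooted representative has height at most twice
the radius, so for `λ = 2 ^ (-1 / (8 k))` the radius bound gives `λ ^ (h₁ + h₂) ≥ n ^ (-1 / 2)`,
hence an agreement subtree with at least `n ^ (β / 2)` leaves.
-/

lemma Real.rpow_le_add_rpow_of_mul_le {β t W x y : ℝ} (hβ : 0 ≤ β) (ht : 0 ≤ t)
    (htβ : 1 / 2 ≤ t ^ β) (hW : 0 ≤ W) (hx : t * W ≤ x) (hy : t * W ≤ y) :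
    W ^ β ≤ x ^ β + y ^ β := by
  have hhalf : W ^ β / 2 ≤ (t * W) ^ β := by
    rw [Real.mul_rpow ht hW]
    nlinarith [Real.rpow_nonneg hW β]
  have htW : 0 ≤ t * W := mul_nonneg ht hW
  linarith [Real.rpow_le_rpow htW hx hβ, Real.rpow_le_rpow htW hy hβ]

lemma Real.exists_pos_half_le_rpow {t : ℝ} (h0 : 0 < t) (h1 : t < 1) :
    ∃ β : ℝ, 0 < β ∧ 1 / 2 ≤ t ^ β :=
  ⟨Real.logb t (1 / 2), Real.logb_pos_of_base_lt_one h0 h1 (by norm_num) (by norm_num),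
    (Real.rpow_logb h0 h1.ne (by norm_num)).ge⟩

lemma rpow_half_le_pow_mul_of_le_logb {k x : ℝ} (hk : 0 < k) (hx : 0 < x) {h : ℕ}
    (hh : (h : ℝ) ≤ 4 * k * Real.logb 2 x) :
    x ^ (1 / 2 : ℝ) ≤ ((2 : ℝ) ^ (-(1 / (8 * k)))) ^ h * x := by
  have hx2 : x = 2 ^ Real.logb 2 x := (Real.rpow_logb two_pos (by norm_num) hx).symm
  have hexp : Real.logb 2 x * (1 / 2) ≤ -(1 / (8 * k)) * h + Real.logb 2 x := by
    have : 1 / (8 * k) * h ≤ 1 / (8 * k) * (4 * k * Real.logb 2 x) := by gcongr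
    have h8 : 1 / (8 * k) * (4 * k * Real.logb 2 x) = Real.logb 2 x / 2 := by
      field_simp; ring
    linarith
  rw [hx2, ← Real.rpow_natCast, ← Real.rpow_mul zero_le_two, ← Real.rpow_mul zero_le_two,
    ← Real.rpow_add two_pos]
  exact Real.rpow_le_rpow_of_exponent_le one_le_two hexp

namespace RTree

variable {L : Type}

lemma leafList_ne_nil (T : RTree L) : T.leafList ≠ [] := by
  induction T with
  | leaf => simp [leafList]
  | node l r ihl => simp [leafList, ihl]

lemma numLeaves_pos (T : RTree L) : 0 < T.numLeaves :=
  List.length_pos_iff.mpr T.leafList_ne_nil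

lemma height_lt_node_left (A B : RTree L) : A.height < (node A B).height := by
  simp only [height]; omega

lemma height_lt_node_right (A B : RTree L) : B.height < (node A B).height := by
  simp only [height]; omega

lemma height_le_two_mul_uradius (T : RTree L) : T.height ≤ 2 * uradius T := by
  suffices T.height ≤ udiam T by rw [uradius]; omega
  cases T with
  | leaf => simp [height, udiam]
  | node l r => simp only [height, udiam]; omega

lemma Embeds.leafList_subset {S T : RTree L} (h : Embeds S T) : S.leafList ⊆ T.leafList := by
  induction h with
  | leaf => exact List.Subset.refl _
  | left _ ih => exact List.subset_append_of_subset_left _ ih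
  | right _ ih => exact List.subset_append_of_subset_right _ ih
  | pair _ _ ih₁ ih₂ =>
      exact List.append_subset.mpr
        ⟨List.subset_append_of_subset_left _ ih₁, List.subset_append_of_subset_right _ ih₂⟩
  | pair_swap _ _ ih₁ ih₂ =>
      exact List.append_subset.mpr
        ⟨List.subset_append_of_subset_right _ ih₁, List.subset_append_of_subset_left _ ih₂⟩

lemma embeds_leaf_of_mem {T : RTree L} {x : L} (hx : x ∈ T.leafList) :
    Embeds (leaf x) T := by
  induction T with
  | leaf b =>
      obtain rfl : x = b := by simpa [leafList] using hx
      exact Embeds.leaf x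
  | node l r ihl ihr =>
      rcases List.mem_append.mp hx with h | h
      · exact (ihl h).left
      · exact (ihr h).right

lemma IsPhylo.left {A B : RTree L} (h : (node A B).IsPhylo) : A.IsPhylo :=
  (List.nodup_append.mp h).1

lemma IsPhylo.right {A B : RTree L} (h : (node A B).IsPhylo) : B.IsPhylo :=
  (List.nodup_append.mp h).2.1

lemma IsPhylo.disjoint {A B : RTree L} (h : (node A B).IsPhylo) :
    A.leafList.Disjoint B.leafList :=
  fun _ ha hb => (List.nodup_append.mp h).2.2 _ ha _ hb rfl

lemma IsPhylo.node_of_embeds {A B S₁ S₂ : RTree L} (h : (node A B).IsPhylo)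
    (h₁ : S₁.IsPhylo) (h₂ : S₂.IsPhylo) (e₁ : Embeds S₁ A) (e₂ : Embeds S₂ B) :
    (node S₁ S₂).IsPhylo :=
  List.nodup_append.mpr ⟨h₁, h₂, fun _ hx _ hy hxy =>
    h.disjoint (e₁.leafList_subset hx) (e₂.leafList_subset (hxy ▸ hy))⟩

lemma numLeaves_node (A B : RTree L) :
    (node A B).numLeaves = A.numLeaves + B.numLeaves := by
  simp [numLeaves, leafList]

lemma numLeaves_le_of_embeds {S T : RTree L} (hS : S.IsPhylo) (h : Embeds S T) :
    S.numLeaves ≤ T.numLeaves :=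
  hS.length_le_of_subset h.leafList_subset

lemma le_umast {T₁ T₂ S : RTree L} (hS : S.IsPhylo) (e₁ : Embeds S T₁) (e₂ : Embeds S T₂) :
    S.numLeaves ≤ umast T₁ T₂ :=
  le_csSup
    ⟨T₁.numLeaves, fun _ ⟨_, _, h₁, _, f₁, _, _, hm⟩ => hm ▸ numLeaves_le_of_embeds h₁ f₁⟩
    ⟨S, S, hS, hS, e₁, e₂, Relation.EqvGen.refl _, rfl⟩

def HasAgreementSubtree (T₁ T₂ : RTree L) (x : ℝ) : Prop :=
  ∃ S : RTree L, S.IsPhylo ∧ Embeds S T₁ ∧ Embeds S T₂ ∧ x ≤ S.numLeaves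

namespace HasAgreementSubtree

variable {T₁ T₂ A B C D : RTree L} {x y : ℝ}

lemma symm (h : HasAgreementSubtree T₁ T₂ x) : HasAgreementSubtree T₂ T₁ x :=
  let ⟨S, hS, e₁, e₂, hx⟩ := h
  ⟨S, hS, e₂, e₁, hx⟩

lemma mono (h : HasAgreementSubtree T₁ T₂ x) (hyx : y ≤ x) : HasAgreementSubtree T₁ T₂ y :=
  let ⟨S, hS, e₁, e₂, hx⟩ := h
  ⟨S, hS, e₁, e₂, hyx.trans hx⟩

lemma node_left (h : HasAgreementSubtree A T₂ x) (B : RTree L) :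
    HasAgreementSubtree (node A B) T₂ x :=
  let ⟨S, hS, e₁, e₂, hx⟩ := h
  ⟨S, hS, e₁.left, e₂, hx⟩

lemma node_right (h : HasAgreementSubtree B T₂ x) (A : RTree L) :
    HasAgreementSubtree (node A B) T₂ x :=
  let ⟨S, hS, e₁, e₂, hx⟩ := h
  ⟨S, hS, e₁.right, e₂, hx⟩

lemma pair (hP : (node A B).IsPhylo) (h₁ : HasAgreementSubtree A C x)
    (h₂ : HasAgreementSubtree B D y) : HasAgreementSubtree (node A B) (node C D) (x + y) := by
  obtain ⟨S₁, hS₁, e₁, f₁, hx⟩ := h₁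
  obtain ⟨S₂, hS₂, e₂, f₂, hy⟩ := h₂
  refine ⟨RTree.node S₁ S₂, hP.node_of_embeds hS₁ hS₂ e₁ e₂, e₁.pair e₂, f₁.pair f₂, ?_⟩
  rw [numLeaves_node, Nat.cast_add]
  exact add_le_add hx hy

lemma pair_swap (hP : (node A B).IsPhylo) (h₁ : HasAgreementSubtree A D x)
    (h₂ : HasAgreementSubtree B C y) : HasAgreementSubtree (node A B) (node C D) (x + y) := by
  obtain ⟨S₁, hS₁, e₁, f₁, hx⟩ := h₁
  obtain ⟨S₂, hS₂, e₂, f₂, hy⟩ := h₂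
  refine ⟨RTree.node S₁ S₂, hP.node_of_embeds hS₁ hS₂ e₁ e₂, e₁.pair e₂, f₁.pair_swap f₂, ?_⟩
  rw [numLeaves_node, Nat.cast_add]
  exact add_le_add hx hy

end HasAgreementSubtree

open Finset

variable [DecidableEq L]

def commonLeaves (T₁ T₂ : RTree L) : Finset L :=
  T₁.leafList.toFinset ∩ T₂.leafList.toFinset

lemma commonLeaves_comm (T₁ T₂ : RTree L) : commonLeaves T₁ T₂ = commonLeaves T₂ T₁ :=
  inter_comm _ _

lemma card_commonLeaves_node_left {A B : RTree L} (h : (node A B).IsPhylo) (T : RTree L) :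
    #(commonLeaves (node A B) T) = #(commonLeaves A T) + #(commonLeaves B T) := by
  rw [← card_union_of_disjoint]
  · simp only [commonLeaves, leafList, List.toFinset_append, union_inter_distrib_right]
  · exact disjoint_left.mpr fun x hA hB => h.disjoint
      (List.mem_toFinset.mp (mem_inter.mp hA).1) (List.mem_toFinset.mp (mem_inter.mp hB).1)

lemma card_commonLeaves_node_right (T : RTree L) {A B : RTree L} (h : (node A B).IsPhylo) :
    #(commonLeaves T (node A B)) = #(commonLeaves T A) + #(commonLeaves T B) := by
  simp only [commonLeaves_comm T, card_commonLeaves_node_left h]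

lemma card_commonLeaves_of_leafSet_eq {T₁ T₂ : RTree L} (hP : T₁.IsPhylo)
    (h : T₁.leafSet = T₂.leafSet) : #(commonLeaves T₁ T₂) = T₁.numLeaves := by
  have hsub : T₁.leafList.toFinset ⊆ T₂.leafList.toFinset := fun x hx =>
    List.mem_toFinset.mpr ((Set.ext_iff.mp h x).mp (List.mem_toFinset.mp hx))
  rw [commonLeaves, inter_eq_left.mpr hsub, List.toFinset_card_of_nodup hP, numLeaves]

lemma card_commonLeaves_leaf_le (x : L) (T : RTree L) : #(commonLeaves (leaf x) T) ≤ 1 :=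
  (card_le_card inter_subset_left).trans (by simp [leafList])

lemma mem_of_commonLeaves_leaf_nonempty {x : L} {T : RTree L}
    (h : (commonLeaves (leaf x) T).Nonempty) : x ∈ T.leafList := by
  obtain ⟨y, hy⟩ := h
  simp only [commonLeaves, leafList, mem_inter, List.mem_toFinset, List.mem_singleton] at hy
  exact hy.1 ▸ hy.2

def weight (lam : ℝ) (T₁ T₂ : RTree L) : ℝ :=
  lam ^ (T₁.height + T₂.height) * #(commonLeaves T₁ T₂)

lemma weight_comm (lam : ℝ) (T₁ T₂ : RTree L) : weight lam T₁ T₂ = weight lam T₂ T₁ := by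
  rw [weight, weight, add_comm, commonLeaves_comm]

section weight

variable {lam : ℝ}

lemma weight_le_of_height_lt_left (hlam0 : 0 ≤ lam) (hlam1 : lam ≤ 1) {T₁ T₁' T₂ : RTree L}
    (hh : T₁'.height < T₁.height)
    (hc : lam * #(commonLeaves T₁ T₂) ≤ #(commonLeaves T₁' T₂)) :
    weight lam T₁ T₂ ≤ weight lam T₁' T₂ :=
  calc lam ^ (T₁.height + T₂.height) * #(commonLeaves T₁ T₂)
      ≤ lam ^ (T₁'.height + T₂.height + 1) * #(commonLeaves T₁ T₂) :=
        mul_le_mul_of_nonneg_right (pow_le_pow_of_le_one hlam0 hlam1 (by omega))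
          (Nat.cast_nonneg _)
    _ = lam ^ (T₁'.height + T₂.height) * (lam * #(commonLeaves T₁ T₂)) := by ring
    _ ≤ lam ^ (T₁'.height + T₂.height) * #(commonLeaves T₁' T₂) := by gcongr

lemma weight_le_of_height_lt_right (hlam0 : 0 ≤ lam) (hlam1 : lam ≤ 1) {T₁ T₂ T₂' : RTree L}
    (hh : T₂'.height < T₂.height)
    (hc : lam * #(commonLeaves T₁ T₂) ≤ #(commonLeaves T₁ T₂')) :
    weight lam T₁ T₂ ≤ weight lam T₁ T₂' := by
  rw [weight_comm, weight_comm lam T₁]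
  rw [commonLeaves_comm T₁, commonLeaves_comm T₁] at hc
  exact weight_le_of_height_lt_left hlam0 hlam1 hh hc

lemma mul_weight_le_weight (hlam0 : 0 ≤ lam) (hlam1 : lam ≤ 1) {t : ℝ} (ht : 0 ≤ t)
    {T₁ T₂ T₁' T₂' : RTree L} (h₁ : T₁'.height ≤ T₁.height) (h₂ : T₂'.height ≤ T₂.height)
    (hc : t * #(commonLeaves T₁ T₂) ≤ #(commonLeaves T₁' T₂')) :
    t * weight lam T₁ T₂ ≤ weight lam T₁' T₂' :=
  calc t * (lam ^ (T₁.height + T₂.height) * #(commonLeaves T₁ T₂))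
      = lam ^ (T₁.height + T₂.height) * (t * #(commonLeaves T₁ T₂)) := by ring
    _ ≤ lam ^ (T₁'.height + T₂'.height) * #(commonLeaves T₁' T₂') :=
        mul_le_mul (pow_le_pow_of_le_one hlam0 hlam1 (by omega)) hc
          (mul_nonneg ht (Nat.cast_nonneg _)) (pow_nonneg hlam0 _)

end weight

lemma hasAgreementSubtree_leaf {lam β : ℝ} (hlam0 : 0 ≤ lam) (hlam1 : lam ≤ 1) (hβ : 0 ≤ β)
    (x : L) (T : RTree L) (hw : 0 < weight lam (leaf x) T) :
    HasAgreementSubtree (leaf x) T (weight lam (leaf x) T ^ β) := by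
  have hcard : (0 : ℝ) < #(commonLeaves (leaf x) T) :=
    pos_of_mul_pos_right hw (pow_nonneg hlam0 _)
  have hx : x ∈ T.leafList :=
    mem_of_commonLeaves_leaf_nonempty (card_pos.mp (by exact_mod_cast hcard))
  refine ⟨leaf x, List.nodup_singleton x, Embeds.leaf x, embeds_leaf_of_mem hx, ?_⟩
  have hw1 : weight lam (leaf x) T ≤ 1 :=
    mul_le_one₀ (pow_le_one₀ hlam0 hlam1) (Nat.cast_nonneg _)
      (by exact_mod_cast card_commonLeaves_leaf_le x T)
  simpa [numLeaves, leafList] using Real.rpow_le_one hw.le hw1 hβ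

lemma heavy_diagonal_of_light_children {lam : ℝ} {A B C D : RTree L}
    (h₁ : (node A B).IsPhylo) (h₂ : (node C D).IsPhylo)
    (hA : (#(commonLeaves A (node C D)) : ℝ) < lam * #(commonLeaves (node A B) (node C D)))
    (hB : (#(commonLeaves B (node C D)) : ℝ) < lam * #(commonLeaves (node A B) (node C D)))
    (hC : (#(commonLeaves (node A B) C) : ℝ) < lam * #(commonLeaves (node A B) (node C D)))
    (hD : (#(commonLeaves (node A B) D) : ℝ) < lam * #(commonLeaves (node A B) (node C D))) :
    ((1 - lam) / 2 * #(commonLeaves (node A B) (node C D)) ≤ #(commonLeaves A C) ∧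
      (1 - lam) / 2 * #(commonLeaves (node A B) (node C D)) ≤ #(commonLeaves B D)) ∨
    ((1 - lam) / 2 * #(commonLeaves (node A B) (node C D)) ≤ #(commonLeaves A D) ∧
      (1 - lam) / 2 * #(commonLeaves (node A B) (node C D)) ≤ #(commonLeaves B C)) := by
  have e₁ := card_commonLeaves_node_left h₁ (node C D)
  have e₂ := card_commonLeaves_node_right (node A B) h₂
  have e₃ := card_commonLeaves_node_right A h₂
  have e₄ := card_commonLeaves_node_right B h₂
  have e₅ := card_commonLeaves_node_left h₁ C
  have e₆ := card_commonLeaves_node_left h₁ D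
  rify at e₁ e₂ e₃ e₄ e₅ e₆
  rcases le_or_gt ((1 - lam) / 2 * #(commonLeaves (node A B) (node C D))) #(commonLeaves A C)
    with hAC | hAC
  · rcases le_or_gt ((1 - lam) / 2 * #(commonLeaves (node A B) (node C D))) #(commonLeaves B D)
      with hBD | hBD
    · exact Or.inl ⟨hAC, hBD⟩
    · right; constructor <;> linarith
  · right; constructor <;> linarith

lemma hasAgreementSubtree_of_light_children {lam β : ℝ} (hlam0 : 0 ≤ lam) (hlam1 : lam < 1)
    (hβ0 : 0 ≤ β) (hβ : 1 / 2 ≤ ((1 - lam) / 2) ^ β) {A B C D : RTree L}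
    (h₁ : (node A B).IsPhylo) (h₂ : (node C D).IsPhylo)
    (hw : 0 < weight lam (node A B) (node C D))
    (ihAC : 0 < weight lam A C → HasAgreementSubtree A C (weight lam A C ^ β))
    (ihBD : 0 < weight lam B D → HasAgreementSubtree B D (weight lam B D ^ β))
    (ihAD : 0 < weight lam A D → HasAgreementSubtree A D (weight lam A D ^ β))
    (ihBC : 0 < weight lam B C → HasAgreementSubtree B C (weight lam B C ^ β))
    (hA : (#(commonLeaves A (node C D)) : ℝ) < lam * #(commonLeaves (node A B) (node C D)))
    (hB : (#(commonLeaves B (node C D)) : ℝ) < lam * #(commonLeaves (node A B) (node C D)))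
    (hC : (#(commonLeaves (node A B) C) : ℝ) < lam * #(commonLeaves (node A B) (node C D)))
    (hD : (#(commonLeaves (node A B) D) : ℝ) < lam * #(commonLeaves (node A B) (node C D))) :
    HasAgreementSubtree (node A B) (node C D) (weight lam (node A B) (node C D) ^ β) := by
  have hμ : 0 < (1 - lam) / 2 := by linarith
  have hμw : 0 < (1 - lam) / 2 * weight lam (node A B) (node C D) := mul_pos hμ hw
  rcases heavy_diagonal_of_light_children h₁ h₂ hA hB hC hD with ⟨hAC, hBD⟩ | ⟨hAD, hBC⟩
  · have hAC := mul_weight_le_weight hlam0 hlam1.le hμ.le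
      (height_lt_node_left A B).le (height_lt_node_left C D).le hAC
    have hBD := mul_weight_le_weight hlam0 hlam1.le hμ.le
      (height_lt_node_right A B).le (height_lt_node_right C D).le hBD
    exact (HasAgreementSubtree.pair h₁ (ihAC (hμw.trans_le hAC))
      (ihBD (hμw.trans_le hBD))).mono (Real.rpow_le_add_rpow_of_mul_le hβ0 hμ.le hβ hw.le hAC hBD)
  · have hAD := mul_weight_le_weight hlam0 hlam1.le hμ.le
      (height_lt_node_left A B).le (height_lt_node_right C D).le hAD
    have hBC := mul_weight_le_weight hlam0 hlam1.le hμ.le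
      (height_lt_node_right A B).le (height_lt_node_left C D).le hBC
    exact (HasAgreementSubtree.pair_swap h₁ (ihAD (hμw.trans_le hAD))
      (ihBC (hμw.trans_le hBC))).mono (Real.rpow_le_add_rpow_of_mul_le hβ0 hμ.le hβ hw.le hAD hBC)

theorem hasAgreementSubtree_weight_rpow {lam β : ℝ} (hlam0 : 0 < lam) (hlam1 : lam < 1)
    (hβ0 : 0 < β) (hβ : 1 / 2 ≤ ((1 - lam) / 2) ^ β) :
    ∀ T₁ T₂ : RTree L, T₁.IsPhylo → T₂.IsPhylo → 0 < weight lam T₁ T₂ →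
      HasAgreementSubtree T₁ T₂ (weight lam T₁ T₂ ^ β)
  | leaf x, T₂, _, _, hw => hasAgreementSubtree_leaf hlam0.le hlam1.le hβ0.le x T₂ hw
  | node A B, leaf y, _, _, hw => by
      rw [weight_comm] at hw ⊢
      exact (hasAgreementSubtree_leaf hlam0.le hlam1.le hβ0.le y _ hw).symm
  | node A B, node C D, h₁, h₂, hw => by
      have hrpow {w : ℝ} (hle : weight lam (node A B) (node C D) ≤ w) :=
        Real.rpow_le_rpow hw.le hle hβ0.le
      by_cases hA : lam * #(commonLeaves (node A B) (node C D)) ≤ #(commonLeaves A (node C D))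
      · have hle := weight_le_of_height_lt_left hlam0.le hlam1.le (height_lt_node_left A B) hA
        exact ((hasAgreementSubtree_weight_rpow hlam0 hlam1 hβ0 hβ A (node C D) h₁.left h₂
          (hw.trans_le hle)).mono (hrpow hle)).node_left B
      by_cases hB : lam * #(commonLeaves (node A B) (node C D)) ≤ #(commonLeaves B (node C D))
      · have hle := weight_le_of_height_lt_left hlam0.le hlam1.le (height_lt_node_right A B) hB
        exact ((hasAgreementSubtree_weight_rpow hlam0 hlam1 hβ0 hβ B (node C D) h₁.right h₂
          (hw.trans_le hle)).mono (hrpow hle)).node_right A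
      by_cases hC : lam * #(commonLeaves (node A B) (node C D)) ≤ #(commonLeaves (node A B) C)
      · have hle := weight_le_of_height_lt_right hlam0.le hlam1.le (height_lt_node_left C D) hC
        exact (((hasAgreementSubtree_weight_rpow hlam0 hlam1 hβ0 hβ (node A B) C h₁ h₂.left
          (hw.trans_le hle)).mono (hrpow hle)).symm.node_left D).symm
      by_cases hD : lam * #(commonLeaves (node A B) (node C D)) ≤ #(commonLeaves (node A B) D)
      · have hle := weight_le_of_height_lt_right hlam0.le hlam1.le (height_lt_node_right C D) hD
        exact (((hasAgreementSubtree_weight_rpow hlam0 hlam1 hβ0 hβ (node A B) D h₁ h₂.right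
          (hw.trans_le hle)).mono (hrpow hle)).symm.node_right C).symm
      exact hasAgreementSubtree_of_light_children hlam0.le hlam1 hβ0.le hβ h₁ h₂ hw
        (hasAgreementSubtree_weight_rpow hlam0 hlam1 hβ0 hβ A C h₁.left h₂.left)
        (hasAgreementSubtree_weight_rpow hlam0 hlam1 hβ0 hβ B D h₁.right h₂.right)
        (hasAgreementSubtree_weight_rpow hlam0 hlam1 hβ0 hβ A D h₁.left h₂.right)
        (hasAgreementSubtree_weight_rpow hlam0 hlam1 hβ0 hβ B C h₁.right h₂.left)
        (not_le.mp hA) (not_le.mp hB) (not_le.mp hC) (not_le.mp hD)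
termination_by T₁ T₂ => (T₁, T₂)

end RTree

/-- For every real `k > 0` there is `β_k > 0` such that any two
unrooted binary phylogenetic trees `T₁`, `T₂` on the same leaf set of cardinality `n`,
each of radius at most `k·log n`, satisfy `mast{T₁,T₂} ≥ n^{β_k}` (log base 2). -/
theorem stmt_15 (k : ℝ) (hk : 0 < k) :
    ∃ βk : ℝ, 0 < βk ∧
      ∀ (L : Type) (T₁ T₂ : RTree L) (n : ℕ),
        T₁.IsPhylo → T₂.IsPhylo → T₁.leafSet = T₂.leafSet → T₁.numLeaves = n →
        (RTree.uradius T₁ : ℝ) ≤ k * Real.logb 2 n →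
        (RTree.uradius T₂ : ℝ) ≤ k * Real.logb 2 n →
        (n : ℝ) ^ βk ≤ (RTree.umast T₁ T₂ : ℝ) := by
  classical
  set lam : ℝ := 2 ^ (-(1 / (8 * k)))
  have hlam0 : 0 < lam := by positivity
  have hlam1 : lam < 1 := Real.rpow_lt_one_of_one_lt_of_neg one_lt_two (by simp [hk])
  obtain ⟨β, hβ0, hβ⟩ := Real.exists_pos_half_le_rpow (t := (1 - lam) / 2) (by linarith)
    (by linarith)
  refine ⟨β / 2, by positivity, fun L T₁ T₂ n hP₁ hP₂ hleaves hn hr₁ hr₂ => ?_⟩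
  have hn0 : (0 : ℝ) < n := by exact_mod_cast hn ▸ T₁.numLeaves_pos
  have hheight : ((T₁.height + T₂.height : ℕ) : ℝ) ≤ 4 * k * Real.logb 2 n := by
    have h₁ : (T₁.height : ℝ) ≤ 2 * T₁.uradius := by exact_mod_cast T₁.height_le_two_mul_uradius
    have h₂ : (T₂.height : ℝ) ≤ 2 * T₂.uradius := by exact_mod_cast T₂.height_le_two_mul_uradius
    push_cast
    linarith
  have hsqrt : (n : ℝ) ^ (1 / 2 : ℝ) ≤ RTree.weight lam T₁ T₂ := by
    rw [RTree.weight, RTree.card_commonLeaves_of_leafSet_eq hP₁ hleaves, hn]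
    exact rpow_half_le_pow_mul_of_le_logb hk hn0 hheight
  obtain ⟨S, hS, e₁, e₂, hSn⟩ := RTree.hasAgreementSubtree_weight_rpow hlam0 hlam1 hβ0 hβ
    T₁ T₂ hP₁ hP₂ ((Real.rpow_pos_of_pos hn0 _).trans_le hsqrt)
  calc (n : ℝ) ^ (β / 2) = ((n : ℝ) ^ (1 / 2 : ℝ)) ^ β := by
        rw [← Real.rpow_mul hn0.le]; ring_nf
    _ ≤ RTree.weight lam T₁ T₂ ^ β := Real.rpow_le_rpow (by positivity) hsqrt hβ0.le
    _ ≤ S.numLeaves := hSn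
    _ ≤ RTree.umast T₁ T₂ := by exact_mod_cast RTree.le_umast hS e₁ e₂
end

section
/- For every integer k > 0, let T1 be the rooted balanced binary phylogenetic tree of height 2k whose leaves, read from left to right, are labelled 1, 2, …, 4^k, and let T2 be the rooted balanced binary tree of height 2k whose leaves from left to right are labelled by the sequence swap(1, 2, …, 4^k). Then T1 and T2 have no rooted agreement subtree with more than 2^k leaves, i.e., mast{T1, T2} ≤ 2^k. -/
/-- `buildL m S` is the rooted balanced binary tree of height `m` whose `2^m` leaves,
read from left to right, are labelled by the entries of the list `S`. -/
def buildL : ℕ → List ℕ → RTree ℕ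
  | 0, S => RTree.leaf S.headI
  | m + 1, S => RTree.node (buildL m (S.take (2 ^ m))) (buildL m (S.drop (2 ^ m)))

/-- The `swap` operation on sequences of length `4^i`: `swap(S) = S` for a sequence of
length one, and if `S = S₁:S₂:S₃:S₄` is a concatenation of four blocks of length
`4^(i-1)`, then `swap(S) = swap(S₁):swap(S₃):swap(S₂):swap(S₄)`. -/
def swapList : ℕ → List ℕ → List ℕ
  | 0, S => S
  | i + 1, S =>
      swapList i (S.take (4 ^ i)) ++
      swapList i (((S.drop (4 ^ i)).drop (4 ^ i)).take (4 ^ i)) ++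
      swapList i ((S.drop (4 ^ i)).take (4 ^ i)) ++
      swapList i (((S.drop (4 ^ i)).drop (4 ^ i)).drop (4 ^ i))

/-!
At height `2(k+1)` the first tree is `((B₀ B₁) (B₂ B₃))`, where `Bᵢ` is the balanced tree of
height `2k` on the `i`-th quarter of the labels, and by the definition of `swap` the second is
`((B₀' B₂') (B₁' B₃'))`, where `Bᵢ'` is the swapped tree on the same quarter. An agreement
subtree either lies in one half of the first tree or its root separates it into two parts lying
in the two halves; likewise for the second tree. A half of one tree meets a half of the other in
a single quarter, so an agreement subtree consists of at most two parts, each an agreement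
subtree of some `Bᵢ` and `Bᵢ'`; by induction it has at most `2 · 2^k` leaves.
-/

theorem Set.union_inter_union_subset {α : Type*} {a b c : Set α} (h : Disjoint b c) :
    (a ∪ b) ∩ (a ∪ c) ⊆ a := by
  rw [← Set.union_inter_distrib_left, h.inter_eq, Set.union_empty]

namespace RTree

variable {L : Type}

theorem leafSet_node (l r : RTree L) : (node l r).leafSet = l.leafSet ∪ r.leafSet := by
  ext x
  simp [leafSet, leafList]

theorem leafSet_nonempty : ∀ T : RTree L, T.leafSet.Nonempty
  | leaf b => ⟨b, List.mem_singleton_self b⟩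
  | node l r => (leafSet_nonempty l).mono (leafSet_node l r ▸ Set.subset_union_left)

theorem numLeaves_node_s16 (l r : RTree L) :
    (node l r).numLeaves = l.numLeaves + r.numLeaves := by
  simp [numLeaves, leafList]

theorem isPhylo_node_iff {l r : RTree L} :
    (node l r).IsPhylo ↔ l.IsPhylo ∧ r.IsPhylo ∧ Disjoint l.leafSet r.leafSet := by
  simp [IsPhylo, leafList, List.nodup_append, Set.disjoint_left, leafSet, List.forall_mem_ne]

def subtrees : RTree L → Set (RTree L)
  | leaf b => {leaf b}
  | node l r => insert (node l r) (l.subtrees ∪ r.subtrees)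

@[simp]
theorem mem_subtrees_self : ∀ T : RTree L, T ∈ T.subtrees
  | leaf _ => rfl
  | node _ _ => Set.mem_insert _ _

theorem leafSet_subset_of_mem_subtrees : ∀ {T X : RTree L}, X ∈ T.subtrees →
    X.leafSet ⊆ T.leafSet
  | leaf _, _, hX => by rw [Set.mem_singleton_iff.1 hX]
  | node l r, X, hX => by
    rw [leafSet_node]
    rcases hX with rfl | hX | hX
    · rw [leafSet_node]
    · exact (leafSet_subset_of_mem_subtrees hX).trans Set.subset_union_left
    · exact (leafSet_subset_of_mem_subtrees hX).trans Set.subset_union_right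

namespace Embeds

variable {S T l r A B : RTree L}

theorem leafSet_subset (h : Embeds S T) : S.leafSet ⊆ T.leafSet := by
  induction h with
  | leaf => rfl
  | left _ ih => rw [leafSet_node]; exact ih.trans Set.subset_union_left
  | right _ ih => rw [leafSet_node]; exact ih.trans Set.subset_union_right
  | pair _ _ ih₁ ih₂ => rw [leafSet_node, leafSet_node]; exact Set.union_subset_union ih₁ ih₂
  | pair_swap _ _ ih₁ ih₂ =>
    rw [leafSet_node, leafSet_node]
    exact Set.union_subset (ih₁.trans Set.subset_union_right) (ih₂.trans Set.subset_union_left)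

theorem not_disjoint (h : Embeds S T) : ¬Disjoint S.leafSet T.leafSet := fun hd =>
  (leafSet_nonempty S).ne_empty (hd.eq_bot_of_le h.leafSet_subset)

theorem children : ∀ {T : RTree L}, Embeds (node A B) T → Embeds A T ∧ Embeds B T
  | .leaf _, h => by cases h
  | .node _ _, h => by
    cases h with
    | left h => exact (children h).imp left left
    | right h => exact (children h).imp right right
    | pair h₁ h₂ => exact ⟨left h₁, right h₂⟩
    | pair_swap h₁ h₂ => exact ⟨right h₁, left h₂⟩

theorem node_comm (h : Embeds S (node l r)) : Embeds S (node r l) := by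
  cases h with
  | left h => exact right h
  | right h => exact left h
  | pair h₁ h₂ => exact pair_swap h₁ h₂
  | pair_swap h₁ h₂ => exact pair h₁ h₂

theorem of_disjoint_right (h : Embeds S (node l r)) (hS : Disjoint S.leafSet r.leafSet) :
    Embeds S l := by
  cases h with
  | left h => exact h
  | right h => exact absurd hS h.not_disjoint
  | pair _ h₂ =>
    exact absurd (hS.mono_left (leafSet_node _ _ ▸ Set.subset_union_right)) h₂.not_disjoint
  | pair_swap h₁ _ =>
    exact absurd (hS.mono_left (leafSet_node _ _ ▸ Set.subset_union_left)) h₁.not_disjoint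

theorem of_disjoint_left (h : Embeds S (node l r)) (hS : Disjoint S.leafSet l.leafSet) :
    Embeds S r :=
  h.node_comm.of_disjoint_right hS

theorem of_mem_subtrees : ∀ {T X : RTree L}, T.IsPhylo → X ∈ T.subtrees → Embeds S T →
    S.leafSet ⊆ X.leafSet → Embeds S X
  | .leaf _, _, _, hX, h, _ => Set.mem_singleton_iff.1 hX ▸ h
  | .node l r, X, hT, hX, h, hS => by
    obtain ⟨hl, hr, hlr⟩ := isPhylo_node_iff.1 hT
    rcases hX with rfl | hX | hX
    · exact h
    · have hSl := hS.trans (leafSet_subset_of_mem_subtrees hX)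
      exact (h.of_disjoint_right (hlr.mono_left hSl)).of_mem_subtrees hl hX hS
    · have hSr := hS.trans (leafSet_subset_of_mem_subtrees hX)
      exact (h.of_disjoint_left (hlr.symm.mono_left hSr)).of_mem_subtrees hr hX hS

end Embeds

def LiesIn (P : Set (Set L)) (S : RTree L) : Prop := ∃ U ∈ P, S.leafSet ⊆ U

def SplitsOver (P : Set (Set L)) (S : RTree L) : Prop :=
  LiesIn P S ∨ ∃ A B, S = node A B ∧ LiesIn P A ∧ LiesIn P B

section Splitting

variable {P Q : Set (Set L)} {S A B : RTree L}

theorem LiesIn.inter (hP : LiesIn P S) (hQ : LiesIn Q S) :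
    LiesIn (Set.image2 (· ∩ ·) P Q) S :=
  let ⟨U, hU, hSU⟩ := hP
  let ⟨V, hV, hSV⟩ := hQ
  ⟨U ∩ V, Set.mem_image2_of_mem hU hV, Set.subset_inter hSU hSV⟩

theorem LiesIn.of_node_left (h : LiesIn P (node A B)) : LiesIn P A :=
  let ⟨U, hU, hAB⟩ := h
  ⟨U, hU, (leafSet_node A B ▸ Set.subset_union_left).trans hAB⟩

theorem LiesIn.of_node_right (h : LiesIn P (node A B)) : LiesIn P B :=
  let ⟨U, hU, hAB⟩ := h
  ⟨U, hU, (leafSet_node A B ▸ Set.subset_union_right).trans hAB⟩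

theorem SplitsOver.inter (hP : SplitsOver P S) (hQ : SplitsOver Q S) :
    SplitsOver (Set.image2 (· ∩ ·) P Q) S := by
  rcases hP with hP | ⟨A, B, rfl, hA, hB⟩ <;> rcases hQ with hQ | ⟨A', B', hS, hA', hB'⟩
  · exact .inl (hP.inter hQ)
  · subst hS
    exact .inr ⟨A', B', rfl, hP.of_node_left.inter hA', hP.of_node_right.inter hB'⟩
  · exact .inr ⟨A, B, rfl, hA.inter hQ.of_node_left, hB.inter hQ.of_node_right⟩
  · obtain ⟨rfl, rfl⟩ := node.inj hS
    exact .inr ⟨A, B, rfl, hA.inter hA', hB.inter hB'⟩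

theorem Embeds.splitsOver {l r : RTree L} (h : Embeds S (node l r)) :
    SplitsOver {l.leafSet, r.leafSet} S := by
  cases h with
  | left h => exact .inl ⟨_, .inl rfl, h.leafSet_subset⟩
  | right h => exact .inl ⟨_, .inr rfl, h.leafSet_subset⟩
  | pair h₁ h₂ =>
    exact .inr ⟨_, _, rfl, ⟨_, .inl rfl, h₁.leafSet_subset⟩, ⟨_, .inr rfl, h₂.leafSet_subset⟩⟩
  | pair_swap h₁ h₂ =>
    exact .inr ⟨_, _, rfl, ⟨_, .inr rfl, h₁.leafSet_subset⟩, ⟨_, .inl rfl, h₂.leafSet_subset⟩⟩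

end Splitting

def MastLE (T₁ T₂ : RTree L) (n : ℕ) : Prop :=
  ∀ S : RTree L, S.IsPhylo → Embeds S T₁ → Embeds S T₂ → S.numLeaves ≤ n

theorem mast_le {T₁ T₂ : RTree L} {n : ℕ} (h : MastLE T₁ T₂ n) : mast T₁ T₂ ≤ n :=
  csSup_le' <| by
    rintro _ ⟨S, hS, h₁, h₂, rfl⟩
    exact h S hS h₁ h₂

theorem mastLE_leaf (b : L) (T : RTree L) : MastLE (leaf b) T 1 := by
  rintro S - h -
  cases h
  rfl

theorem SplitsOver.numLeaves_le {P : Set (Set L)} {S T₁ T₂ : RTree L} {n : ℕ}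
    (hP : ∀ A, LiesIn P A → A.IsPhylo → Embeds A T₁ → Embeds A T₂ → A.numLeaves ≤ n)
    (hS : SplitsOver P S) (hphylo : S.IsPhylo) (h₁ : Embeds S T₁) (h₂ : Embeds S T₂) :
    S.numLeaves ≤ 2 * n := by
  rcases hS with hS | ⟨A, B, rfl, hA, hB⟩
  · exact (hP S hS hphylo h₁ h₂).trans (Nat.le_mul_of_pos_left n two_pos)
  · obtain ⟨hAphylo, hBphylo, -⟩ := isPhylo_node_iff.1 hphylo
    rw [numLeaves_node_s16, two_mul]
    exact add_le_add (hP A hA hAphylo h₁.children.1 h₂.children.1)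
      (hP B hB hBphylo h₁.children.2 h₂.children.2)

theorem MastLE.quartet {Q Q' : Fin 4 → RTree L} {n : ℕ}
    (hQ : ∀ i, MastLE (Q i) (Q' i) n) (hleaf : ∀ i, (Q' i).leafSet = (Q i).leafSet)
    (hT : (node (node (Q 0) (Q 1)) (node (Q 2) (Q 3))).IsPhylo)
    (hT' : (node (node (Q' 0) (Q' 2)) (node (Q' 1) (Q' 3))).IsPhylo) :
    MastLE (node (node (Q 0) (Q 1)) (node (Q 2) (Q 3)))
      (node (node (Q' 0) (Q' 2)) (node (Q' 1) (Q' 3))) (2 * n) := by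
  intro S hS h₁ h₂
  have hd : Disjoint ((Q 0).leafSet ∪ (Q 1).leafSet) ((Q 2).leafSet ∪ (Q 3).leafSet) := by
    simpa only [leafSet_node] using (isPhylo_node_iff.1 hT).2.2
  have hd03 := (Set.disjoint_union_left.1 hd).1.mono_right Set.subset_union_right
  have hd12 := (Set.disjoint_union_left.1 hd).2.mono_right Set.subset_union_left
  have hquarter : ∀ U ∈ Set.image2 (· ∩ ·)
      {(node (Q 0) (Q 1)).leafSet, (node (Q 2) (Q 3)).leafSet}
      {(node (Q' 0) (Q' 2)).leafSet, (node (Q' 1) (Q' 3)).leafSet},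
      ∃ i, U ⊆ (Q i).leafSet := by
    simp only [leafSet_node, hleaf, Set.mem_image2, Set.mem_insert_iff, Set.mem_singleton_iff]
    rintro _ ⟨U, rfl | rfl, V, rfl | rfl, rfl⟩
    · exact ⟨0, Set.union_inter_union_subset hd12⟩
    · exact ⟨1, Set.union_comm (Q 0).leafSet _ ▸ Set.union_inter_union_subset hd03⟩
    · exact ⟨2, Set.union_comm (Q 0).leafSet _ ▸ Set.union_inter_union_subset hd03.symm⟩
    · refine ⟨3, ?_⟩
      rw [Set.union_comm (Q 2).leafSet, Set.union_comm (Q 1).leafSet]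
      exact Set.union_inter_union_subset hd12.symm
  refine (h₁.splitsOver.inter h₂.splitsOver).numLeaves_le
    (fun A ⟨U, hU, hAU⟩ hA h₁ h₂ => ?_) hS h₁ h₂
  obtain ⟨i, hi⟩ := hquarter U hU
  have hAi := hAU.trans hi
  refine hQ i A hA (h₁.of_mem_subtrees hT ?_ hAi) (h₂.of_mem_subtrees hT' ?_ (hleaf i ▸ hAi)) <;>
    fin_cases i <;> simp [subtrees]

end RTree

theorem four_pow_eq_two_pow (k : ℕ) : 4 ^ k = 2 ^ (2 * k) := by
  rw [pow_mul]
  norm_num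

theorem buildL_append {n : ℕ} {A : List ℕ} (B : List ℕ) (hA : A.length = 2 ^ n) :
    buildL (n + 1) (A ++ B) = .node (buildL n A) (buildL n B) := by
  rw [buildL, List.take_left' hA, List.drop_left' hA]

theorem buildL_quarters {k : ℕ} {A B C : List ℕ} (D : List ℕ) (hA : A.length = 4 ^ k)
    (hB : B.length = 4 ^ k) (hC : C.length = 4 ^ k) :
    buildL (2 * (k + 1)) (A ++ B ++ C ++ D) =
      .node (.node (buildL (2 * k) A) (buildL (2 * k) B))
        (.node (buildL (2 * k) C) (buildL (2 * k) D)) := by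
  rw [four_pow_eq_two_pow] at hA hB hC
  rw [List.append_assoc (A ++ B), show 2 * (k + 1) = 2 * k + 1 + 1 by ring,
    buildL_append _ (by simp [hA, hB, pow_succ, mul_two]), buildL_append _ hA,
    buildL_append _ hC]

theorem leafList_buildL : ∀ {m : ℕ} {S : List ℕ}, S.length = 2 ^ m →
    (buildL m S).leafList = S
  | 0, _, hS => by
    obtain ⟨x, rfl⟩ := List.length_eq_one_iff.1 hS
    rfl
  | m + 1, S, hS => by
    rw [buildL, RTree.leafList, leafList_buildL, leafList_buildL, List.take_append_drop] <;>
      simp [hS, pow_succ, mul_two]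

theorem swapList_quarters {i : ℕ} {A B C : List ℕ} (D : List ℕ) (hA : A.length = 4 ^ i)
    (hB : B.length = 4 ^ i) (hC : C.length = 4 ^ i) :
    swapList (i + 1) (A ++ B ++ C ++ D) =
      swapList i A ++ swapList i C ++ swapList i B ++ swapList i D := by
  simp only [swapList, List.append_assoc, List.take_left' hA, List.drop_left' hA,
    List.take_left' hB, List.drop_left' hB, List.take_left' hC, List.drop_left' hC]

theorem swapList_perm : ∀ {i : ℕ} {S : List ℕ}, S.length = 4 ^ i → (swapList i S).Perm S
  | 0, _, _ => .refl _
  | i + 1, S, hS => by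
    obtain ⟨A, B, C, D, hA, hB, hC, hD, rfl⟩ : ∃ A B C D : List ℕ, A.length = 4 ^ i ∧
        B.length = 4 ^ i ∧ C.length = 4 ^ i ∧ D.length = 4 ^ i ∧ S = A ++ B ++ C ++ D :=
      ⟨S.take (4 ^ i), (S.drop (4 ^ i)).take (4 ^ i), ((S.drop (4 ^ i)).drop (4 ^ i)).take (4 ^ i),
        ((S.drop (4 ^ i)).drop (4 ^ i)).drop (4 ^ i), by simp [hS, pow_succ]; omega⟩
    rw [swapList_quarters D hA hB hC]
    calc (swapList i A ++ swapList i C ++ swapList i B ++ swapList i D).Perm (A ++ C ++ B ++ D) :=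
          (((swapList_perm hA).append (swapList_perm hC)).append (swapList_perm hB)).append
            (swapList_perm hD)
      _ = A ++ (C ++ (B ++ D)) := by simp only [List.append_assoc]
      List.Perm _ (A ++ (B ++ (C ++ D))) := (List.perm_append_comm_assoc C B D).append_left A
      _ = A ++ B ++ C ++ D := by simp only [List.append_assoc]

theorem range'_quarters (a n : ℕ) :
    List.range' a (4 * n) = List.range' a n ++ List.range' (a + n) n ++
      List.range' (a + 2 * n) n ++ List.range' (a + 3 * n) n := by
  rw [show 4 * n = n + n + n + n by ring, ← List.range'_append_1, ← List.range'_append_1,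
    ← List.range'_append_1]
  ring_nf

theorem leafSet_buildL_eq_of_perm {k : ℕ} {S S' : List ℕ} (h : S.Perm S')
    (hS' : S'.length = 4 ^ k) : (buildL (2 * k) S).leafSet = (buildL (2 * k) S').leafSet := by
  rw [four_pow_eq_two_pow] at hS'
  ext x
  rw [RTree.leafSet, leafList_buildL (h.length_eq.trans hS'), RTree.leafSet,
    leafList_buildL hS']
  exact h.mem_iff

theorem isPhylo_buildL_of_perm {k a : ℕ} {S : List ℕ} (h : S.Perm (List.range' a (4 ^ k))) :
    (buildL (2 * k) S).IsPhylo := by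
  rw [RTree.IsPhylo,
    leafList_buildL (by rw [h.length_eq, List.length_range', four_pow_eq_two_pow])]
  exact h.nodup_iff.2 List.nodup_range'

theorem mastLE_range'_swapList (k a : ℕ) :
    RTree.MastLE (buildL (2 * k) (List.range' a (4 ^ k)))
      (buildL (2 * k) (swapList k (List.range' a (4 ^ k)))) (2 ^ k) := by
  induction k generalizing a with
  | zero => exact RTree.mastLE_leaf a _
  | succ k ih =>
    let R : Fin 4 → List ℕ := fun i => List.range' (a + i * 4 ^ k) (4 ^ k)
    have hR : ∀ i, (R i).length = 4 ^ k := fun _ => List.length_range'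
    have hperm : ∀ i, (swapList k (R i)).Perm (R i) := fun i => swapList_perm (hR i)
    have hR' : ∀ i, (swapList k (R i)).length = 4 ^ k := fun i => (hperm i).length_eq.trans (hR i)
    have hsplit : List.range' a (4 ^ (k + 1)) = R 0 ++ R 1 ++ R 2 ++ R 3 := by
      simpa [R, pow_succ, mul_comm] using range'_quarters a (4 ^ k)
    have hT : (buildL (2 * (k + 1)) (List.range' a (4 ^ (k + 1)))).IsPhylo :=
      isPhylo_buildL_of_perm (.refl _)
    have hT' : (buildL (2 * (k + 1)) (swapList (k + 1) (List.range' a (4 ^ (k + 1))))).IsPhylo :=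
      isPhylo_buildL_of_perm (swapList_perm List.length_range')
    simp only [hsplit, swapList_quarters _ (hR 0) (hR 1) (hR 2),
      buildL_quarters _ (hR 0) (hR 1) (hR 2), buildL_quarters _ (hR' 0) (hR' 2) (hR' 1)]
      at hT hT' ⊢
    rw [pow_succ' 2 k]
    exact RTree.MastLE.quartet (Q := fun i => buildL (2 * k) (R i))
      (Q' := fun i => buildL (2 * k) (swapList k (R i))) (fun _ => ih _)
      (fun i => leafSet_buildL_eq_of_perm (hperm i) (hR i)) hT hT'

theorem stmt_16_general (k : ℕ) :
    RTree.mast (buildL (2 * k) (List.range' 1 (4 ^ k)))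
        (buildL (2 * k) (swapList k (List.range' 1 (4 ^ k)))) ≤ 2 ^ k :=
  RTree.mast_le (mastLE_range'_swapList k 1)

/-- For `k > 0`, let `T₁` be the rooted balanced binary tree of
height `2k` with leaves `1, 2, …, 4^k` from left to right, and `T₂` the rooted balanced
binary tree of height `2k` with leaves `swap(1, 2, …, 4^k)` from left to right.  Then
`T₁` and `T₂` have no rooted agreement subtree with more than `2^k` leaves,
i.e. `mast{T₁,T₂} ≤ 2^k`. -/
theorem stmt_16 (k : ℕ) (hk : 0 < k) :
    RTree.mast (buildL (2 * k) (List.range' 1 (4 ^ k)))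
        (buildL (2 * k) (swapList k (List.range' 1 (4 ^ k)))) ≤ 2 ^ k :=
  stmt_16_general k
end
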